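/- If an n-dimensional simplex in ℝⁿ is f-fat (its inradius-to-circumradius ratio is at least f), then there exists f' > 0 depending only on f and n such that every k-dimensional face of the simplex, for 2 ≤ k ≤ n−1, is f'-fat. -/

import Mathlib

open Metric

noncomputable section

abbrev E (n : ℕ) := EuclideanSpace ℝ (Fin n)

/-- The inradius of a set: radius of the largest closed ball, relative to the affine span
of the set (a `k`-ball for a `k`-dimensional set), contained in the set. -/
def inradius {n : ℕ} (s : Set (E n)) : ℝ :=
  sSup {r : ℝ | 0 ≤ r ∧ ∃ c ∈ affineSpan ℝ s, closedBall c r ∩ (affineSpan ℝ s : Set (E n)) ⊆ s}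

def circumradius {n : ℕ} (s : Set (E n)) : ℝ :=
  sInf {r : ℝ | 0 ≤ r ∧ ∃ c, s ⊆ closedBall c r}

def Fat {n m : ℕ} (f : ℝ) (s : Affine.Simplex ℝ (E n) m) : Prop :=
  f ≤ inradius (convexHull ℝ (Set.range s.points)) / circumradius (convexHull ℝ (Set.range s.points))

/-!
The signed distance `φᵢ` from the facet opposite vertex `i` is an affine, `1`-Lipschitz function
taking the value `wᵢ hᵢ` at the point with barycentric coordinates `w`, where `hᵢ` is the height
at `i`; on the simplex it ranges over `[0, hᵢ]`. A ball of radius `r` in the simplex (within its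
affine span) therefore has `2r ≤ hᵢ`, by looking at its diameter along the `i`-th altitude.
Conversely, if all heights of a `k`-simplex are at least `b`, then the ball of radius `b / (k + 1)`
about the centroid lies in it, since there `|wᵢ - 1 / (k + 1)| ≤ dist / hᵢ`. A height of a face is
at least the corresponding height of the simplex, because the opposite facet of the face lies in
that of the simplex. Hence the inradius of a `k`-face is at least `2 / (k + 1)` times that of the
simplex, while its circumradius is at most that of the simplex.
-/

namespace Affine.Simplex

variable {V : Type*} [NormedAddCommGroup V] [InnerProductSpace ℝ V]
variable {n : ℕ} [NeZero n] (s : Simplex ℝ V n)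

lemma abs_signedInfDist_sub_le (i : Fin (n + 1)) (x y : V) :
    |s.signedInfDist i x - s.signedInfDist i y| ≤ dist x y := by
  rw [signedInfDist, AffineSubspace.signedInfDist_def, signedDist_triangle_left, dist_comm]
  exact abs_signedDist_le_dist _ _ _

lemma signedInfDist_self_eq_height (i : Fin (n + 1)) :
    s.signedInfDist i (s.points i) = s.height i := by
  rw [signedInfDist_apply_self, height, altitudeFoot, dist_eq_norm_vsub]

lemma signedInfDist_affineCombination_eq_mul_height {w : Fin (n + 1) → ℝ} (hw : ∑ j, w j = 1)
    (i : Fin (n + 1)) :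
    s.signedInfDist i (Finset.univ.affineCombination ℝ s.points w) = w i * s.height i := by
  rw [signedInfDist_affineCombination _ _ hw, height, altitudeFoot, dist_eq_norm_vsub]

lemma signedInfDist_mem_Icc_of_mem_convexHull {x : V}
    (hx : x ∈ convexHull ℝ (Set.range s.points)) (i : Fin (n + 1)) :
    s.signedInfDist i x ∈ Set.Icc 0 (s.height i) := by
  refine convexHull_min ?_ ((convex_Icc _ _).affine_preimage (s.signedInfDist i).toAffineMap) hx
  rintro _ ⟨j, rfl⟩
  obtain rfl | hj := eq_or_ne j i
  · simp [signedInfDist_self_eq_height, (s.height_pos j).le]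
  · simp [signedInfDist_apply_of_ne _ hj, (s.height_pos i).le]

lemma signedInfDist_smul_vadd (i : Fin (n + 1)) (t : ℝ) (x : V) :
    s.signedInfDist i (t • (s.points i -ᵥ s.altitudeFoot i) +ᵥ x) =
      t * s.height i + s.signedInfDist i x := by
  have hfoot : s.signedInfDist i (s.altitudeFoot i) = 0 :=
    AffineSubspace.signedInfDist_apply_of_mem _ (s.altitudeFoot_mem_affineSpan_image_compl i)
  rw [← ContinuousAffineMap.coe_toAffineMap, AffineMap.map_vadd, map_smul,
    AffineMap.linearMap_vsub]
  simp [hfoot, signedInfDist_self_eq_height]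

lemma two_mul_le_height_of_closedBall_inter_subset {c : V} {r : ℝ}
    (hc : c ∈ affineSpan ℝ (Set.range s.points)) (hr : 0 ≤ r)
    (hball : closedBall c r ∩ affineSpan ℝ (Set.range s.points) ⊆
      convexHull ℝ (Set.range s.points))
    (i : Fin (n + 1)) : 2 * r ≤ s.height i := by
  have hh := s.height_pos i
  have hmem : ∀ t, |t| ≤ r / s.height i →
      s.signedInfDist i (t • (s.points i -ᵥ s.altitudeFoot i) +ᵥ c) ∈ Set.Icc 0 (s.height i) := by
    intro t ht
    refine s.signedInfDist_mem_Icc_of_mem_convexHull (hball ⟨?_, ?_⟩) i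
    · rw [mem_closedBall, dist_vadd_left, norm_smul, Real.norm_eq_abs, ← dist_eq_norm_vsub,
        ← height]
      exact (le_div_iff₀ hh).1 ht
    · exact AffineSubspace.vadd_mem_of_mem_direction (Submodule.smul_mem _ _ <|
        AffineSubspace.vsub_mem_direction (mem_affineSpan ℝ (Set.mem_range_self i))
          (s.altitudeFoot_mem_affineSpan i)) hc
  have hup := (hmem (r / s.height i) (by rw [abs_of_nonneg (by positivity)])).2
  have hlow := (hmem (-(r / s.height i)) (by rw [abs_neg, abs_of_nonneg (by positivity)])).1
  rw [signedInfDist_smul_vadd, div_mul_cancel₀ _ hh.ne'] at hup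
  rw [signedInfDist_smul_vadd, neg_mul, div_mul_cancel₀ _ hh.ne'] at hlow
  linarith

lemma height_le_dist_of_mem_affineSpan_image_compl {i : Fin (n + 1)} {y : V}
    (hy : y ∈ affineSpan ℝ (s.points '' {i}ᶜ)) : s.height i ≤ dist y (s.points i) := by
  have hy0 : s.signedInfDist i y = 0 := AffineSubspace.signedInfDist_apply_of_mem _ hy
  have h := s.abs_signedInfDist_sub_le i (s.points i) y
  rwa [signedInfDist_self_eq_height, hy0, sub_zero, abs_of_pos (s.height_pos i), dist_comm] at h

lemma height_le_height_face {m : ℕ} [NeZero m] {fs : Finset (Fin (n + 1))} (h : fs.card = m + 1)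
    (j : Fin (m + 1)) : s.height (fs.orderEmbOfFin h j) ≤ (s.face h).height j := by
  calc s.height (fs.orderEmbOfFin h j)
      ≤ dist ((s.face h).altitudeFoot j) (s.points (fs.orderEmbOfFin h j)) :=
        s.height_le_dist_of_mem_affineSpan_image_compl (affineSpan_mono ℝ ?_
          ((s.face h).altitudeFoot_mem_affineSpan_image_compl j))
    _ = (s.face h).height j := by rw [height, dist_comm, face_points]
  rintro _ ⟨l, hl, rfl⟩
  exact ⟨fs.orderEmbOfFin h l, fun hlj => hl ((fs.orderEmbOfFin h).injective hlj), rfl⟩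

lemma signedInfDist_centroid (i : Fin (n + 1)) :
    s.signedInfDist i (Finset.univ.centroid ℝ s.points) = s.height i / (n + 1) := by
  rw [Finset.centroid_def, signedInfDist_affineCombination_eq_mul_height _
    (Finset.univ.sum_centroidWeights_eq_one_of_nonempty ℝ Finset.univ_nonempty),
    Finset.centroidWeights_apply, Finset.card_univ, Fintype.card_fin]
  push_cast
  ring

lemma closedBall_centroid_inter_affineSpan_subset_convexHull {b : ℝ}
    (hb : ∀ i, b ≤ s.height i) :
    closedBall (Finset.univ.centroid ℝ s.points) (b / (n + 1)) ∩
      affineSpan ℝ (Set.range s.points) ⊆ convexHull ℝ (Set.range s.points) := by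
  rintro x ⟨hxc, hx⟩
  obtain ⟨w, hw, rfl⟩ := eq_affineCombination_of_mem_affineSpan_of_fintype hx
  refine affineCombination_mem_convexHull (fun i _ => ?_) hw
  have hdist := s.abs_signedInfDist_sub_le i (Finset.univ.affineCombination ℝ s.points w)
    (Finset.univ.centroid ℝ s.points)
  rw [signedInfDist_affineCombination_eq_mul_height _ hw, signedInfDist_centroid] at hdist
  have hbi : b / (n + 1) ≤ s.height i / (n + 1) := by gcongr; exact hb i
  rw [mem_closedBall] at hxc
  have hwh : 0 ≤ w i * s.height i := by linarith [(abs_le.1 hdist).1]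
  exact nonneg_of_mul_nonneg_left hwh (s.height_pos i)

end Affine.Simplex

section Radii

variable {n : ℕ}

lemma inradius_nonneg (X : Set (E n)) : 0 ≤ inradius X :=
  Real.sSup_nonneg fun _ hr => hr.1

lemma nonempty_circumradius_set {X : Set (E n)} (hX : Bornology.IsBounded X) :
    {r : ℝ | 0 ≤ r ∧ ∃ c, X ⊆ closedBall c r}.Nonempty := by
  obtain ⟨r, hr⟩ := hX.subset_closedBall 0
  exact ⟨max r 0, le_max_right _ _, 0, hr.trans (closedBall_subset_closedBall (le_max_left _ _))⟩

lemma circumradius_mono {X Y : Set (E n)} (hXY : X ⊆ Y) (hY : Bornology.IsBounded Y) :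
    circumradius X ≤ circumradius Y :=
  csInf_le_csInf ⟨0, fun _ hr => hr.1⟩ (nonempty_circumradius_set hY)
    fun _ ⟨hr, c, hc⟩ => ⟨hr, c, hXY.trans hc⟩

variable {m : ℕ} [NeZero m] (s : Affine.Simplex ℝ (E n) m)

lemma circumradius_convexHull_pos : 0 < circumradius (convexHull ℝ (Set.range s.points)) := by
  set p := s.points 0
  set q := s.points (Fin.last m)
  have hpq : 0 < dist p q := dist_pos.2 (s.independent.injective.ne Fin.last_pos'.ne)
  have hbdd := isBounded_convexHull.2 (Set.finite_range s.points).isBounded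
  suffices dist p q / 2 ≤ circumradius (convexHull ℝ (Set.range s.points)) by linarith
  refine le_csInf (nonempty_circumradius_set hbdd) fun r ⟨_, c, hc⟩ => ?_
  have hp := hc (subset_convexHull ℝ _ (Set.mem_range_self 0))
  have hq := hc (subset_convexHull ℝ _ (Set.mem_range_self (Fin.last m)))
  rw [mem_closedBall] at hp hq
  linarith [dist_triangle_right p q c]

lemma two_mul_inradius_le_height (i : Fin (m + 1)) :
    2 * inradius (convexHull ℝ (Set.range s.points)) ≤ s.height i := by
  rw [inradius, affineSpan_convexHull, ← le_div_iff₀' two_pos]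
  refine Real.sSup_le (fun r ⟨hr, c, hc, hball⟩ => ?_) (by positivity)
  linarith [s.two_mul_le_height_of_closedBall_inter_subset hc hr hball i]

lemma le_inradius_of_closedBall_inter_subset {c : E n} {r : ℝ}
    (hc : c ∈ affineSpan ℝ (Set.range s.points)) (hr : 0 ≤ r)
    (hball : closedBall c r ∩ affineSpan ℝ (Set.range s.points) ⊆
      convexHull ℝ (Set.range s.points)) :
    r ≤ inradius (convexHull ℝ (Set.range s.points)) := by
  rw [inradius, affineSpan_convexHull]
  refine le_csSup ⟨s.height 0 / 2, fun r' ⟨hr', c', hc', hball'⟩ => ?_⟩ ⟨hr, c, hc, hball⟩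
  linarith [s.two_mul_le_height_of_closedBall_inter_subset hc' hr' hball' 0]

lemma two_mul_inradius_div_le_inradius_face {k : ℕ} [NeZero k] {fs : Finset (Fin (m + 1))}
    (h : fs.card = k + 1) :
    2 * inradius (convexHull ℝ (Set.range s.points)) / (k + 1) ≤
      inradius (convexHull ℝ (Set.range (s.face h).points)) :=
  le_inradius_of_closedBall_inter_subset (s.face h)
    (centroid_mem_affineSpan_of_nonempty ℝ _ Finset.univ_nonempty)
    (by have := inradius_nonneg (convexHull ℝ (Set.range s.points)); positivity)
    ((s.face h).closedBall_centroid_inter_affineSpan_subset_convexHull fun j =>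
      (two_mul_inradius_le_height s _).trans (s.height_le_height_face h j))

end Radii

/-- If an `n`-simplex in `ℝⁿ` is `f`-fat then there is `f' > 0`, depending only on `f` and `n`,
such that every `k`-dimensional face, `2 ≤ k ≤ n - 1`, is `f'`-fat. -/
theorem fat_simplex_faces_fat (n : ℕ) (f : ℝ) (hf : 0 < f) :
    ∃ f' > 0, ∀ s : Affine.Simplex ℝ (E n) n, Fat f s →
      ∀ k : ℕ, 2 ≤ k → k ≤ n - 1 →
        ∀ (fs : Finset (Fin (n + 1))) (h : fs.card = k + 1), Fat f' (s.face h) := by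
  refine ⟨2 * f / (n + 1), by positivity, fun s hs k hk2 hkn fs h => ?_⟩
  have : NeZero k := ⟨by omega⟩
  have : NeZero n := ⟨by omega⟩
  set T := convexHull ℝ (Set.range s.points)
  set F := convexHull ℝ (Set.range (s.face h).points)
  have hRF : 0 < circumradius F := circumradius_convexHull_pos (s.face h)
  have hRFT : circumradius F ≤ circumradius T :=
    circumradius_mono (convexHull_mono (s.range_face_points h ▸ Set.image_subset_range _ _))
      (isBounded_convexHull.2 (Set.finite_range s.points).isBounded)
  have hfR : f * circumradius T ≤ inradius T := (le_div_iff₀ (hRF.trans_le hRFT)).1 hs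
  have hkn' : (k : ℝ) + 1 ≤ n + 1 := by exact_mod_cast (by omega : k + 1 ≤ n + 1)
  have hrT := inradius_nonneg T
  rw [Fat, le_div_iff₀ hRF]
  calc 2 * f / (n + 1) * circumradius F
      ≤ 2 * f / (n + 1) * circumradius T := by gcongr
    _ = 2 * (f * circumradius T) / (n + 1) := by ring
    _ ≤ 2 * inradius T / (n + 1) := by gcongr
    _ ≤ 2 * inradius T / (k + 1) := by gcongr
    _ ≤ inradius F := two_mul_inradius_div_le_inradius_face s h
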